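/- arXiv:2505.17046 — 5 statements merged into one kernel-verified Lean document; each statement's English description precedes it below -/
import Mathlib

section
/- For every c ≥ 2 and α, β, γ ∈ ℂ, the 2^c × 2^c tridiagonal Toeplitz matrix satisfies the Kronecker-product recursion D^{(c)}_{α,β,γ} = I ⊗ D^{(c−1)}_{α,β,γ} + β · (J ⊗ (J')^{⊗(c−1)}) + γ · (J' ⊗ J^{⊗(c−1)}), where (J)^{⊗k} denotes the k-fold Kronecker power of J. -/
/- STATEMENT 1: Kronecker-product recursion for the tridiagonal Toeplitz
   matrix: `D^{(c)}_{α,β,γ} = I ⊗ D^{(c−1)}_{α,β,γ}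
   + β (J ⊗ (J')^{⊗(c−1)}) + γ (J' ⊗ J^{⊗(c−1)})` for c ≥ 2. -/

open Kronecker

noncomputable section

/-- The `2^c × 2^c` tridiagonal Toeplitz matrix with diagonal `α`,
    superdiagonal `β` and subdiagonal `γ`. -/
def triD (c : ℕ) (α β γ : ℂ) : Matrix (Fin (2 ^ c)) (Fin (2 ^ c)) ℂ :=
  Matrix.of fun i j =>
    if (i : ℕ) = (j : ℕ) then α
    else if (j : ℕ) = (i : ℕ) + 1 then β
    else if (i : ℕ) = (j : ℕ) + 1 then γ
    else 0

/-- The 2×2 matrix `J = [[0,1],[0,0]]`. -/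
def J : Matrix (Fin 2) (Fin 2) ℂ := !![0, 1; 0, 0]

/-- The 2×2 matrix `J' = [[0,0],[1,0]]`. -/
def J' : Matrix (Fin 2) (Fin 2) ℂ := !![0, 0; 1, 0]

/-- Index identification `Fin 2 × Fin (2^k) ≃ Fin (2^(k+1))`, the first
    factor being the most significant (standard Kronecker ordering). -/
def idx (k : ℕ) : Fin 2 × Fin (2 ^ k) ≃ Fin (2 ^ (k + 1)) :=
  finProdFinEquiv.trans (finCongr (pow_succ' 2 k).symm)

/-- `kpow A k` is the k-fold Kronecker power `A^{⊗k}` of a 2×2 matrix. -/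
def kpow (A : Matrix (Fin 2) (Fin 2) ℂ) : (k : ℕ) → Matrix (Fin (2 ^ k)) (Fin (2 ^ k)) ℂ
  | 0 => 1
  | k + 1 => (Matrix.reindex (idx k) (idx k)) (A ⊗ₖ kpow A k)

/-- Index identification `Fin 2 × Fin (2^(c−1)) ≃ Fin (2^c)` for `c ≥ 2`. -/
def idx' (c : ℕ) (hc : 2 ≤ c) : Fin 2 × Fin (2 ^ (c - 1)) ≃ Fin (2 ^ c) :=
  (idx (c - 1)).trans (finCongr (by congr 1; omega))

open scoped Matrix

/-! Writing `i = idx (a, b)` with `a` the block index, `D^{(c)}` splits into 2×2 blocks of size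
`2^(c-1)`: both diagonal blocks are `D^{(c-1)}`, and the off-diagonal blocks contain a single
corner entry, `β` at `(2^(c-1) - 1, 0)` and `γ` at `(0, 2^(c-1) - 1)`. These corners are exactly
the single nonzero entries of `(J')^{⊗(c-1)}` and `J^{⊗(c-1)}`. -/

lemma idx_val (k : ℕ) (a : Fin 2) (b : Fin (2 ^ k)) :
    (idx k (a, b) : ℕ) = b + 2 ^ k * a := by
  simp [idx, finCongr_apply]

lemma idx'_val (c : ℕ) (hc : 2 ≤ c) (a : Fin 2) (b : Fin (2 ^ (c - 1))) :
    (idx' c hc (a, b) : ℕ) = b + 2 ^ (c - 1) * a := by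
  simp [idx', finCongr_apply, idx_val]

lemma kpow_succ_apply_idx (A : Matrix (Fin 2) (Fin 2) ℂ) (k : ℕ) (a a' : Fin 2)
    (b b' : Fin (2 ^ k)) :
    kpow A (k + 1) (idx k (a, b)) (idx k (a', b')) = A a a' * kpow A k b b' := by
  simp [kpow]

lemma kpow_transpose (A : Matrix (Fin 2) (Fin 2) ℂ) (k : ℕ) : kpow Aᵀ k = (kpow A k)ᵀ := by
  induction k with
  | zero => simp [kpow]
  | succ k ih =>
    simp only [kpow, ih, ← Matrix.kroneckerMap_transpose, Matrix.transpose_reindex]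

lemma J_transpose : Jᵀ = J' := by
  ext i j
  fin_cases i <;> fin_cases j <;> rfl

lemma kpow_J_apply (k : ℕ) (i j : Fin (2 ^ k)) :
    kpow J k i j = if (i : ℕ) = 0 ∧ (j : ℕ) = 2 ^ k - 1 then 1 else 0 := by
  induction k with
  | zero =>
    fin_cases i; fin_cases j
    simp [kpow]
  | succ k ih =>
    obtain ⟨⟨a, b⟩, rfl⟩ := (idx k).surjective i
    obtain ⟨⟨a', b'⟩, rfl⟩ := (idx k).surjective j
    have hb := b.isLt
    have hb' := b'.isLt
    have h1 : 1 ≤ 2 ^ k := Nat.one_le_two_pow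
    rw [kpow_succ_apply_idx, ih, idx_val, idx_val, pow_succ]
    fin_cases a <;> fin_cases a' <;> simp [J, -Fin.val_eq_zero_iff] <;>
      (try split_ifs) <;> first | rfl | omega

lemma kpow_J'_apply (k : ℕ) (i j : Fin (2 ^ k)) :
    kpow J' k i j = if (i : ℕ) = 2 ^ k - 1 ∧ (j : ℕ) = 0 then 1 else 0 := by
  rw [← J_transpose, kpow_transpose, Matrix.transpose_apply, kpow_J_apply]
  simp only [and_comm]

theorem tridiagonal_kronecker_recursion (c : ℕ) (hc : 2 ≤ c) (α β γ : ℂ) :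
    triD c α β γ =
      (Matrix.reindex (idx' c hc) (idx' c hc))
          ((1 : Matrix (Fin 2) (Fin 2) ℂ) ⊗ₖ triD (c - 1) α β γ)
      + β • (Matrix.reindex (idx' c hc) (idx' c hc)) (J ⊗ₖ kpow J' (c - 1))
      + γ • (Matrix.reindex (idx' c hc) (idx' c hc)) (J' ⊗ₖ kpow J (c - 1)) := by
  ext i j
  obtain ⟨⟨a, b⟩, rfl⟩ := (idx' c hc).surjective i
  obtain ⟨⟨a', b'⟩, rfl⟩ := (idx' c hc).surjective j
  have hb := b.isLt
  have hb' := b'.isLt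
  have h1 : 1 ≤ 2 ^ (c - 1) := Nat.one_le_two_pow
  simp only [Matrix.add_apply, Matrix.smul_apply, Matrix.reindex_apply,
    Matrix.submatrix_apply, Equiv.symm_apply_apply, Matrix.kroneckerMap_apply,
    kpow_J_apply, kpow_J'_apply, triD, Matrix.of_apply, idx'_val, smul_eq_mul]
  fin_cases a <;> fin_cases a' <;> simp [J, J', -Fin.val_eq_zero_iff] <;>
    split_ifs <;> first | rfl | omega
end
end

section
/- Let φ ∈ ℝ, c ≥ 1, t_1,…,t_c ∈ ℝ, and bits x_1,…,x_c ∈ {0,1}. Define the 2×2 rotation-type matrix R(t) = [[cos t, sin t],[−sin t, cos t]]. Then sin(φ + Σ_{k=1}^c x_k t_k) = (1, 0) · R(x_1 t_1) R(x_2 t_2) ⋯ R(x_c t_c) · (sin φ, cos φ)ᵀ. In particular, the discretization of sin(αx + φ) on a dyadic grid admits an exact quantized tensor train representation of bond dimension 2, independent of the grid resolution. -/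
/- STATEMENT 4: the rank-2 QTT identity for the sine function:
   sin(φ + Σ_k x_k t_k) = (1,0) · R(x_1 t_1) ⋯ R(x_c t_c) · (sin φ, cos φ)ᵀ,
   where R(t) = [[cos t, sin t],[−sin t, cos t]] and each x_k ∈ {0,1}. -/

open Matrix

noncomputable section

/-- The 2×2 rotation-type matrix `R(t) = [[cos t, sin t],[−sin t, cos t]]`. -/
def R (t : ℝ) : Matrix (Fin 2) (Fin 2) ℝ :=
  !![Real.cos t, Real.sin t; -Real.sin t, Real.cos t]

lemma R_list_mulVec (ts : List ℝ) (φ : ℝ) :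
    (ts.map R).prod.mulVec ![Real.sin φ, Real.cos φ] =
      ![Real.sin (φ + ts.sum), Real.cos (φ + ts.sum)] := by
  induction ts generalizing φ with
  | nil => simp [Matrix.one_mulVec]
  | cons a l ih =>
    rw [List.map_cons, List.prod_cons, ← Matrix.mulVec_mulVec, ih]
    funext i
    fin_cases i <;>
      simp [R, Matrix.mulVec, dotProduct, Fin.sum_univ_two,
        Real.sin_add, Real.cos_add, List.sum_cons] <;> ring

theorem sine_qtt_rank_two (c : ℕ) (hc : 1 ≤ c) (φ : ℝ) (t : Fin c → ℝ)
    (x : Fin c → ℝ) (hx : ∀ k, x k = 0 ∨ x k = 1) :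
    Real.sin (φ + ∑ k, x k * t k) =
      ((List.ofFn fun k : Fin c => R (x k * t k)).prod.mulVec
        ![Real.sin φ, Real.cos φ]) 0 := by
  have h : (List.ofFn fun k : Fin c => R (x k * t k)) =
      (List.ofFn fun k : Fin c => x k * t k).map R := by
    rw [List.map_ofFn]; rfl
  rw [h, R_list_mulVec, List.sum_ofFn]
  simp
end
end

section
/- Let ν > 0 and α > 1, and define u : ℝ × [0,∞) → ℝ by u(x,t) = 2νπ e^{−νπ²t} sin(πx) / (α + e^{−νπ²t} cos(πx)). Then the denominator satisfies α + e^{−νπ²t} cos(πx) ≥ α − 1 > 0 for all x ∈ ℝ and t ≥ 0, u satisfies Burgers' equation ∂u/∂t = ν ∂²u/∂x² − u ∂u/∂x at every (x,t) with t ≥ 0, and it satisfies the initial condition u(x,0) = 2νπ sin(πx)/(α + cos(πx)) and the Dirichlet boundary conditions u(0,t) = u(1,t) = 0 for all t ≥ 0. -/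
/-!
The solution is the Cole–Hopf transform `u = -2ν φₓ/φ` of the heat solution
`φ(x,t) = α + e^{-νπ²t} cos(πx)`: whenever `φ ≠ 0` solves `φₜ = ν φₓₓ`, the
quotient `-2ν φₓ/φ` solves Burgers' equation, by a direct computation of its derivatives.
For `t ≥ 0` we have `e^{-νπ²t} ≤ 1`, so `φ ≥ α - 1 > 0`.
-/

noncomputable section

def u (ν α x t : ℝ) : ℝ :=
  2 * ν * Real.pi * Real.exp (-ν * Real.pi ^ 2 * t) * Real.sin (Real.pi * x) /
    (α + Real.exp (-ν * Real.pi ^ 2 * t) * Real.cos (Real.pi * x))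

open Real

def coleHopf (ν : ℝ) (φ : ℝ → ℝ → ℝ) (x t : ℝ) : ℝ :=
  -2 * ν * deriv (φ · t) x / φ x t

section ColeHopf

variable {ν : ℝ} {φ φx φxx φxxx : ℝ → ℝ → ℝ}

theorem coleHopf_eq_of_hasDerivAt (hφx : ∀ x t, HasDerivAt (φ · t) (φx x t) x) :
    coleHopf ν φ = fun x t => -2 * ν * φx x t / φ x t := by
  funext x t
  rw [coleHopf, (hφx x t).deriv]

theorem hasDerivAt_coleHopf_quotient {t y : ℝ} (hφx : HasDerivAt (φ · t) (φx y t) y)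
    (hφxx : HasDerivAt (φx · t) (φxx y t) y) (hφ : φ y t ≠ 0) :
    HasDerivAt (fun y => -2 * ν * φx y t / φ y t)
      (-2 * ν * (φxx y t * φ y t - φx y t ^ 2) / φ y t ^ 2) y :=
  (hφxx.const_mul (-2 * ν)).div hφx hφ |>.congr_deriv (by ring)

theorem coleHopf_burgers {S : Set ℝ} {x t : ℝ}
    (hφx : ∀ x t, HasDerivAt (φ · t) (φx x t) x)
    (hφxx : ∀ y, HasDerivAt (φx · t) (φxx y t) y)
    (hφxxx : HasDerivAt (φxx · t) (φxxx x t) x)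
    (hφt : HasDerivWithinAt (φ x ·) (ν * φxx x t) S t)
    (hφxt : HasDerivWithinAt (φx x ·) (ν * φxxx x t) S t)
    (hS : UniqueDiffWithinAt ℝ S t) (hφ : ∀ y, φ y t ≠ 0) :
    derivWithin (coleHopf ν φ x ·) S t =
      ν * iteratedDeriv 2 (coleHopf ν φ · t) x
        - coleHopf ν φ x t * deriv (coleHopf ν φ · t) x := by
  have hux : deriv (fun y => -2 * ν * φx y t / φ y t) =
      fun y => -2 * ν * (φxx y t * φ y t - φx y t ^ 2) / φ y t ^ 2 :=
    funext fun y => (hasDerivAt_coleHopf_quotient (hφx y t) (hφxx y) (hφ y)).deriv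
  have huxx : HasDerivAt (fun y => -2 * ν * (φxx y t * φ y t - φx y t ^ 2) / φ y t ^ 2)
      (-2 * ν * (φxxx x t * φ x t ^ 2 - 3 * φx x t * φxx x t * φ x t + 2 * φx x t ^ 3) /
        φ x t ^ 3) x := by
    refine ((((hφxxx.mul (hφx x t)).sub ((hφxx x).pow 2)).const_mul (-2 * ν)).div
      ((hφx x t).pow 2) (pow_ne_zero 2 (hφ x))).congr_deriv ?_
    simp only [Pi.mul_apply, Pi.sub_apply, Pi.pow_apply]
    field_simp [hφ x]
    ring
  have hut : HasDerivWithinAt (fun s => -2 * ν * φx x s / φ x s)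
      (-2 * ν ^ 2 * (φxxx x t * φ x t - φx x t * φxx x t) / φ x t ^ 2) S t :=
    (hφxt.const_mul (-2 * ν)).div hφt (hφ x) |>.congr_deriv (by ring)
  rw [coleHopf_eq_of_hasDerivAt hφx, hut.derivWithin hS, iteratedDeriv_succ, iteratedDeriv_one,
    hux, huxx.deriv]
  field_simp [hφ x]
  ring

end ColeHopf

theorem hasDerivAt_mul_sin_mul (a c y : ℝ) :
    HasDerivAt (fun y => a * sin (c * y)) (a * c * cos (c * y)) y :=
  ((Real.hasDerivAt_sin (c * y)).comp y ((hasDerivAt_id' y).const_mul c)).const_mul a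
    |>.congr_deriv (by ring)

theorem hasDerivAt_mul_cos_mul (a c y : ℝ) :
    HasDerivAt (fun y => a * cos (c * y)) (a * (-c * sin (c * y))) y :=
  ((Real.hasDerivAt_cos (c * y)).comp y ((hasDerivAt_id' y).const_mul c)).const_mul a
    |>.congr_deriv (by ring)

theorem hasDerivAt_exp_mul_mul_const (k b s : ℝ) :
    HasDerivAt (fun s => exp (k * s) * b) (k * (exp (k * s) * b)) s :=
  ((hasDerivAt_id' s).const_mul k).exp.mul_const b |>.congr_deriv (by ring)

def heatSolution (ν α x t : ℝ) : ℝ :=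
  α + exp (-ν * π ^ 2 * t) * cos (π * x)

theorem hasDerivAt_heatSolution_x (ν α x t : ℝ) :
    HasDerivAt (heatSolution ν α · t)
      (exp (-ν * π ^ 2 * t) * (-π * sin (π * x))) x :=
  (hasDerivAt_mul_cos_mul _ π x).const_add α

theorem sub_one_le_heatSolution {ν t : ℝ} (α x : ℝ) (hν : 0 ≤ ν) (ht : 0 ≤ t) :
    α - 1 ≤ heatSolution ν α x t := by
  have hE : exp (-ν * π ^ 2 * t) ≤ 1 :=
    Real.exp_le_one_iff.2 (by nlinarith [mul_nonneg (mul_nonneg hν (sq_nonneg π)) ht])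
  have hcos := Real.neg_one_le_cos (π * x)
  rw [heatSolution]
  nlinarith [Real.exp_pos (-ν * π ^ 2 * t)]

theorem u_eq_coleHopf_heatSolution (ν α : ℝ) : u ν α = coleHopf ν (heatSolution ν α) := by
  rw [coleHopf_eq_of_hasDerivAt (hasDerivAt_heatSolution_x ν α)]
  funext x t
  rw [u, heatSolution]
  ring

theorem coleHopf_heatSolution_burgers {ν α t : ℝ} (x : ℝ) (hν : 0 ≤ ν) (hα : 1 < α)
    (ht : 0 ≤ t) :
    derivWithin (coleHopf ν (heatSolution ν α) x ·) (Set.Ici 0) t =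
      ν * iteratedDeriv 2 (coleHopf ν (heatSolution ν α) · t) x
        - coleHopf ν (heatSolution ν α) x t *
          deriv (coleHopf ν (heatSolution ν α) · t) x := by
  set k := -ν * π ^ 2
  refine coleHopf_burgers
    (φxx := fun y s => exp (k * s) * (-π * π * cos (π * y)))
    (φxxx := fun y s => exp (k * s) * (-π * π * (-π * sin (π * y))))
    (hasDerivAt_heatSolution_x ν α) (fun y => (hasDerivAt_mul_sin_mul _ _ y).const_mul _)
    ((hasDerivAt_mul_cos_mul _ _ x).const_mul _) ?heat ?heat_x (uniqueDiffOn_Ici 0 t ht)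
    fun y => (by linarith [sub_one_le_heatSolution α y hν ht] : (0 : ℝ) < _).ne'
  case heat =>
    exact ((hasDerivAt_exp_mul_mul_const k _ t).const_add α).hasDerivWithinAt.congr_deriv
      (by ring)
  case heat_x =>
    exact (hasDerivAt_exp_mul_mul_const k _ t).hasDerivWithinAt.congr_deriv (by ring)

theorem burgers_analytic_solution (ν α : ℝ) (hν : 0 < ν) (hα : 1 < α) :
    (∀ x t : ℝ, 0 ≤ t →
        α - 1 ≤ α + Real.exp (-ν * Real.pi ^ 2 * t) * Real.cos (Real.pi * x)) ∧
    0 < α - 1 ∧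
    (∀ x t : ℝ, 0 ≤ t →
        derivWithin (fun s => u ν α x s) (Set.Ici 0) t
          = ν * iteratedDeriv 2 (fun s => u ν α s t) x
            - u ν α x t * deriv (fun s => u ν α s t) x) ∧
    (∀ x : ℝ,
        u ν α x 0 = 2 * ν * Real.pi * Real.sin (Real.pi * x) /
          (α + Real.cos (Real.pi * x))) ∧
    (∀ t : ℝ, 0 ≤ t → u ν α 0 t = 0 ∧ u ν α 1 t = 0) := by
  refine ⟨fun x t ht => sub_one_le_heatSolution α x hν.le ht, by linarith,
    fun x t ht => ?_, fun x => by simp [u], fun t _ => by simp [u]⟩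
  rw [u_eq_coleHopf_heatSolution]
  exact coleHopf_heatSolution_burgers x hν.le hα ht
end
end

section
/- Let p be a real polynomial of degree at most d and let c ≥ 1. Then there exist u, w ∈ ℝ^{d+1} and matrices A_k^0, A_k^1 ∈ ℝ^{(d+1)×(d+1)} for k = 1,…,c such that for every bit string x_1,…,x_c ∈ {0,1}, p(Σ_{k=1}^c x_k 2^{−k}) = uᵀ A_1^{x_1} A_2^{x_2} ⋯ A_c^{x_c} w. That is, the dyadic discretization of a degree-d polynomial admits a QTT representation with bond dimension d + 1, independent of the grid resolution. -/
/- STATEMENT 16: the dyadic discretization of a real polynomial of degree at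
   most d admits a QTT representation with bond dimension d+1: there exist
   u, w ∈ ℝ^{d+1} and digit-dependent matrices A_k^0, A_k^1 ∈ ℝ^{(d+1)×(d+1)}
   such that for every bit string x_1,…,x_c,
   p(Σ_k x_k 2^{−k}) = uᵀ A_1^{x_1} ⋯ A_c^{x_c} w. -/

open Matrix

noncomputable def qttA (d : ℕ) (b : Bool) : Matrix (Fin (d+1)) (Fin (d+1)) ℝ :=
  fun i m => (((2:ℝ) ^ (i:ℕ))⁻¹) *
    (if b then (Nat.choose i m : ℝ) else if (m:ℕ) = (i:ℕ) then 1 else 0)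

lemma qttA_mulVec (d : ℕ) (b : Bool) (t : ℝ) :
    (qttA d b).mulVec (fun m => t ^ (m:ℕ)) =
      fun i : Fin (d+1) => (((if b then (1:ℝ) else 0) + t)/2) ^ (i:ℕ) := by
  funext i
  rw [mulVec, dotProduct]
  cases b with
  | false =>
    simp only [qttA, if_false]
    rw [Finset.sum_eq_single i]
    · simp [div_pow, div_eq_mul_inv, mul_pow, inv_pow, mul_comm]
    · intro m _ hm
      have : (m:ℕ) ≠ (i:ℕ) := fun h => hm (Fin.ext h)
      simp [this]
    · simp
  | true =>
    simp only [qttA, if_true]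
    have key : ((1 + t)/2) ^ (i:ℕ) =
        ((2:ℝ) ^ (i:ℕ))⁻¹ * ∑ m ∈ Finset.range ((i:ℕ)+1), (Nat.choose i m : ℝ) * t ^ m := by
      rw [div_pow, div_eq_inv_mul]
      congr 1
      rw [add_comm, add_pow]
      refine Finset.sum_congr rfl fun m _ => ?_
      ring
    have ext : ∑ m ∈ Finset.range ((i:ℕ)+1), (Nat.choose i m : ℝ) * t ^ m =
        ∑ m ∈ Finset.range (d+1), (Nat.choose i m : ℝ) * t ^ m := by
      refine Finset.sum_subset ?_ ?_
      · intro m hm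
        have hmi : m ≤ (i:ℕ) := Nat.lt_succ_iff.mp (Finset.mem_range.mp hm)
        exact Finset.mem_range.mpr (Nat.lt_succ_of_le (hmi.trans i.is_le))
      · intro m _ hm
        have : (i:ℕ) < m := Nat.lt_of_not_le fun h => hm (Finset.mem_range.mpr (Nat.lt_succ_of_le h))
        simp [Nat.choose_eq_zero_of_lt this]
    rw [key, ext, ← Fin.sum_univ_eq_sum_range (fun m => (Nat.choose i m : ℝ) * t ^ m) (d+1),
      Finset.mul_sum]
    refine Finset.sum_congr rfl fun m _ => ?_
    ring

lemma qtt_prod (d : ℕ) : ∀ (L : List Bool),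
    ((L.map (qttA d)).prod).mulVec (fun m => (0:ℝ) ^ (m:ℕ)) =
      fun i : Fin (d+1) => (L.foldr (fun b t => ((if b then (1:ℝ) else 0) + t)/2) 0) ^ (i:ℕ)
  | [] => by
    funext i
    simp
  | b :: L => by
    rw [List.map_cons, List.prod_cons, List.foldr_cons, ← Matrix.mulVec_mulVec,
      qtt_prod d L, qttA_mulVec]

lemma qtt_val (c : ℕ) (x : Fin c → Bool) :
    ((List.ofFn x).foldr (fun b t => ((if b then (1:ℝ) else 0) + t)/2) 0) =
      ∑ k : Fin c, if x k then ((2:ℝ) ^ ((k:ℕ)+1))⁻¹ else 0 := by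
  induction c with
  | zero => simp
  | succ n ih =>
    rw [List.ofFn_succ, List.foldr_cons, ih, Fin.sum_univ_succ]
    have h0 : (if x 0 then ((2:ℝ) ^ ((0:Fin (n+1)).val+1))⁻¹ else 0)
        = (if x 0 then (1:ℝ) else 0)/2 := by
      cases h : x 0 <;> norm_num [h]
    rw [h0]
    have h1 : ∀ k : Fin n, (if x k.succ then ((2:ℝ) ^ ((k.succ:ℕ).succ))⁻¹ else 0)
        = (if x k.succ then ((2:ℝ) ^ ((k:ℕ)+1))⁻¹ else 0)/2 := by
      intro k
      cases h : x k.succ <;> simp [h, Fin.val_succ, pow_succ] <;> ring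
    calc ((if x 0 then (1:ℝ) else 0) +
          ∑ k : Fin n, if (x ∘ Fin.succ) k then ((2:ℝ) ^ ((k:ℕ)+1))⁻¹ else 0)/2
        = (if x 0 then (1:ℝ) else 0)/2 +
          ∑ k : Fin n, (if x k.succ then ((2:ℝ) ^ ((k:ℕ)+1))⁻¹ else 0)/2 := by
          rw [add_div, Finset.sum_div]; rfl
      _ = _ := by
          congr 1
          refine Finset.sum_congr rfl fun k _ => ?_
          rw [← h1 k]

theorem polynomial_qtt_rank_degree_plus_one (d c : ℕ) (hc : 1 ≤ c)
    (p : Polynomial ℝ) (hp : p.natDegree ≤ d) :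
    ∃ (u w : Fin (d + 1) → ℝ)
      (A : Fin c → Bool → Matrix (Fin (d + 1)) (Fin (d + 1)) ℝ),
      ∀ x : Fin c → Bool,
        p.eval (∑ k : Fin c, if x k then ((2 : ℝ) ^ ((k : ℕ) + 1))⁻¹ else 0)
          = u ⬝ᵥ ((List.ofFn fun k : Fin c => A k (x k)).prod.mulVec w) := by
  refine ⟨fun i => p.coeff i, fun m => (0:ℝ) ^ (m:ℕ), fun _ b => qttA d b, fun x => ?_⟩
  have hmap : (List.ofFn fun k : Fin c => qttA d (x k)) = (List.ofFn x).map (qttA d) := by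
    rw [List.map_ofFn]; rfl
  rw [hmap, qtt_prod d (List.ofFn x), qtt_val c x]
  set s := ∑ k : Fin c, if x k then ((2:ℝ) ^ ((k:ℕ)+1))⁻¹ else 0
  rw [Polynomial.eval_eq_sum_range' (Nat.lt_succ_of_le hp), dotProduct,
    ← Fin.sum_univ_eq_sum_range (fun i => p.coeff i * s ^ i) (d+1)]
end

section
/- Let m ≥ 1, α_1, α_2, α_3, φ_1, φ_2, φ_3 ∈ ℝ, and define the tensor T ∈ ℝ^{2^m × 2^m × 2^m} by T_{i,j,k} = sin(α_1 · i/2^m + φ_1) · sin(α_2 · j/2^m + φ_2) · sin(α_3 · k/2^m + φ_3) for i, j, k ∈ {0,…,2^m − 1}. Then T admits an exact tensor-train representation with 3m cores of bond dimension at most 2 in serial ordering: there exist u, w ∈ ℝ² and matrices B_ℓ^0, B_ℓ^1 ∈ ℝ^{2×2} for ℓ = 1,…,3m such that T_{i,j,k} = uᵀ B_1^{z_1} ⋯ B_{3m}^{z_{3m}} w, where z_1,…,z_m are the binary digits of i, z_{m+1},…,z_{2m} those of j, and z_{2m+1},…,z_{3m} those of k (most significant first). -/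
/- STATEMENT 17: the tensor T_{i,j,k} = sin(α₁ i/2^m + φ₁) sin(α₂ j/2^m + φ₂)
   sin(α₃ k/2^m + φ₃) admits an exact tensor-train representation with 3m
   cores of bond dimension at most 2 in serial ordering (binary digits of i,
   then of j, then of k, each most significant first). -/

open Matrix

noncomputable def rotM (δ : ℝ) : Matrix (Fin 2) (Fin 2) ℝ :=
  !![Real.cos δ, -Real.sin δ; Real.sin δ, Real.cos δ]
noncomputable def srow (θ : ℝ) : Fin 2 → ℝ := ![Real.sin θ, Real.cos θ]
lemma vecMul_rotM (θ δ : ℝ) : Matrix.vecMul (srow θ) (rotM δ) = srow (θ + δ) := by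
  funext idx; fin_cases idx <;>
    simp [Matrix.vecMul, srow, rotM, dotProduct, Fin.sum_univ_two,
      Real.sin_add, Real.cos_add] <;> ring

noncomputable def chainL (a : ℝ) (n : ℕ) (x : ℕ) : List (Matrix (Fin 2) (Fin 2) ℝ) :=
  List.ofFn fun l : Fin n => rotM (if Nat.testBit x (n - 1 - (l : ℕ)) then a / 2 ^ ((l : ℕ) + 1) else 0)

lemma chain_vecMul : ∀ (n : ℕ) (a θ : ℝ) (x : ℕ), x < 2 ^ n →
    Matrix.vecMul (srow θ) (chainL a n x).prod = srow (θ + a * x / 2 ^ n) := by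
  intro n
  induction n with
  | zero =>
    intro a θ x hx
    interval_cases x
    simp [chainL]
  | succ n ih =>
    intro a θ x hx
    have htail : chainL a (n + 1) x =
        rotM (if Nat.testBit x n then a / 2 else 0) :: chainL (a / 2) n (x % 2 ^ n) := by
      rw [chainL, List.ofFn_succ, chainL]
      congr 1
      · norm_num
      · congr 1
        funext l
        have h1 : n + 1 - 1 - ((l : ℕ) + 1) = n - 1 - (l : ℕ) := by omega
        have h2 : Nat.testBit (x % 2 ^ n) (n - 1 - (l : ℕ)) = Nat.testBit x (n - 1 - (l : ℕ)) := by
          rw [Nat.testBit_mod_two_pow]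
          have : n - 1 - (l : ℕ) < n := by omega
          simp [this]
        have h3 : a / 2 ^ ((l : ℕ) + 1 + 1) = a / 2 / 2 ^ ((l : ℕ) + 1) := by
          rw [div_div, ← pow_succ']
        simp only [Fin.val_succ, h1, h2, h3]
    rw [htail, List.prod_cons, ← Matrix.vecMul_vecMul, vecMul_rotM,
      ih (a / 2) _ (x % 2 ^ n) (Nat.mod_lt _ (by positivity))]
    refine congrArg srow ?_
    have hq : x / 2 ^ n < 2 := Nat.div_lt_of_lt_mul (by rw [← pow_succ]; exact hx)
    have hdm : 2 ^ n * (x / 2 ^ n) + x % 2 ^ n = x := Nat.div_add_mod x (2 ^ n)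
    have htb : x.testBit n = decide (x / 2 ^ n % 2 = 1) := Nat.testBit_eq_decide_div_mod_eq
    have h2n : (2 : ℝ) ^ n ≠ 0 := by positivity
    rcases Bool.eq_false_or_eq_true (Nat.testBit x n) with hb | hb
    · -- bit = true : x = 2^n + r
      rw [hb] at htb
      have h5 : x / 2 ^ n % 2 = 1 := of_decide_eq_true htb.symm
      have hq1 : x / 2 ^ n = 1 := by
        rcases Nat.le_one_iff_eq_zero_or_eq_one.mp (Nat.lt_succ_iff.mp hq) with h | h
        · rw [h] at h5; simp at h5
        · exact h
      have hxr : x = 2 ^ n + x % 2 ^ n := by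
        rw [hq1, mul_one] at hdm; exact hdm.symm
      have hcast : (x : ℝ) = 2 ^ n + ((x % 2 ^ n : ℕ) : ℝ) := by
        exact_mod_cast congrArg (fun t : ℕ => (t : ℝ)) hxr
      rw [hb, hcast]
      simp only [if_true]
      field_simp
      ring
    · -- bit = false : x = x % 2^n
      rw [hb] at htb
      have h5 : ¬ x / 2 ^ n % 2 = 1 := of_decide_eq_false htb.symm
      have hq0 : x / 2 ^ n = 0 := by
        rcases Nat.le_one_iff_eq_zero_or_eq_one.mp (Nat.lt_succ_iff.mp hq) with h | h
        · exact h
        · exact absurd (by rw [h]) h5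
      have hxr : x = x % 2 ^ n := by
        rw [hq0, mul_zero, zero_add] at hdm; exact hdm.symm
      have hcast : (x : ℝ) = ((x % 2 ^ n : ℕ) : ℝ) := by rw [← hxr]
      rw [hb, hcast]
      simp only [Bool.false_eq_true, if_false]
      field_simp
      ring

noncomputable def projM (ψ : ℝ) : Matrix (Fin 2) (Fin 2) ℝ :=
  !![Real.sin ψ, Real.cos ψ; 0, 0]

lemma vecMul_projM (θ ψ : ℝ) :
    Matrix.vecMul (srow θ) (projM ψ) = Real.sin θ • srow ψ := by
  funext idx; fin_cases idx <;>
    simp [Matrix.vecMul, srow, projM, dotProduct, Fin.sum_univ_two]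

lemma smul_vecMul' (c : ℝ) (v : Fin 2 → ℝ) (A : Matrix (Fin 2) (Fin 2) ℝ) :
    Matrix.vecMul (c • v) A = c • Matrix.vecMul v A := by
  funext idx
  simp [Matrix.vecMul, dotProduct, Fin.sum_univ_two, smul_eq_mul]
  ring

noncomputable def modL (Q : Matrix (Fin 2) (Fin 2) ℝ) (a : ℝ) (n : ℕ) (x : ℕ) :
    List (Matrix (Fin 2) (Fin 2) ℝ) :=
  List.ofFn fun l : Fin n =>
    (if (l : ℕ) = 0 then Q else 1) *
      rotM (if Nat.testBit x (n - 1 - (l : ℕ)) then a / 2 ^ ((l : ℕ) + 1) else 0)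

lemma modL_prod (Q : Matrix (Fin 2) (Fin 2) ℝ) (a : ℝ) (n x : ℕ) (hn : 1 ≤ n) :
    (modL Q a n x).prod = Q * (chainL a n x).prod := by
  obtain ⟨n', rfl⟩ : ∃ n', n = n' + 1 := ⟨n - 1, by omega⟩
  rw [modL, chainL, List.ofFn_succ, List.ofFn_succ, List.prod_cons, List.prod_cons]
  simp [mul_assoc]


noncomputable def coreB (m : ℕ) (α₁ α₂ α₃ φ₂ φ₃ : ℝ) (l : Fin (3 * m)) (b : Bool) :
    Matrix (Fin 2) (Fin 2) ℝ :=
  if (l : ℕ) < m then rotM (if b then α₁ / 2 ^ ((l : ℕ) + 1) else 0)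
  else if (l : ℕ) < 2 * m then
    (if (l : ℕ) = m then projM φ₂ else 1) *
      rotM (if b then α₂ / 2 ^ ((l : ℕ) - m + 1) else 0)
  else
    (if (l : ℕ) = 2 * m then projM φ₃ else 1) *
      rotM (if b then α₃ / 2 ^ ((l : ℕ) - 2 * m + 1) else 0)

def theBits (m i j k : ℕ) (l : ℕ) : Bool :=
  if l < m then Nat.testBit i (m - 1 - l)
  else if l < 2 * m then Nat.testBit j (2 * m - 1 - l)
  else Nat.testBit k (3 * m - 1 - l)

lemma split_lemma (m : ℕ) (hm : 1 ≤ m) (α₁ α₂ α₃ φ₂ φ₃ : ℝ) (i j k : ℕ) :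
    (List.ofFn fun l : Fin (3 * m) => coreB m α₁ α₂ α₃ φ₂ φ₃ l (theBits m i j k (l : ℕ)))
      = chainL α₁ m i ++ (modL (projM φ₂) α₂ m j ++ modL (projM φ₃) α₃ m k) := by
  apply List.ext_getElem
  · simp only [List.length_ofFn, List.length_append, chainL, modL]
    ring
  · intro p h1 h2
    simp only [List.length_ofFn] at h1
    rw [List.getElem_ofFn]
    rw [List.getElem_append]
    simp only [chainL, modL, List.length_ofFn]
    by_cases hp1 : p < m
    · rw [dif_pos hp1, List.getElem_ofFn]
      simp only [coreB, theBits, Fin.val_mk, if_pos hp1]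
    · rw [dif_neg hp1]
      rw [List.getElem_append]
      simp only [List.length_ofFn]
      by_cases hp2 : p < 2 * m
      · have hpm : p - m < m := by omega
        rw [dif_pos hpm, List.getElem_ofFn]
        simp only [coreB, theBits, Fin.val_mk, if_neg hp1, if_pos hp2]
        have e1 : m - 1 - (p - m) = 2 * m - 1 - p := by omega
        have e2 : (p - m) + 1 = p - m + 1 := rfl
        rw [e1]
        by_cases hq : p = m
        · simp [hq, Nat.sub_self]
        · have : ¬ (p - m = 0) := by omega
          simp [hq, this]
      · have hpm : ¬ p - m < m := by omega
        rw [dif_neg hpm, List.getElem_ofFn]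
        simp only [coreB, theBits, Fin.val_mk, if_neg hp1, if_neg hp2]
        have e1 : m - 1 - (p - m - m) = 3 * m - 1 - p := by omega
        have e2 : p - m - m + 1 = p - 2 * m + 1 := by omega
        rw [e1, e2]
        by_cases hq : p = 2 * m
        · simp [hq, show 2 * m - m - m = 0 from by omega]
        · have : ¬ (p - m - m = 0) := by omega
          simp [hq, this]

theorem triple_sine_tensor_tt_rank_two (m : ℕ) (hm : 1 ≤ m)
    (α₁ α₂ α₃ φ₁ φ₂ φ₃ : ℝ) :
    ∃ (u w : Fin 2 → ℝ) (B : Fin (3 * m) → Bool → Matrix (Fin 2) (Fin 2) ℝ),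
      ∀ i j k : Fin (2 ^ m),
        Real.sin (α₁ * (i : ℕ) / 2 ^ m + φ₁) *
          Real.sin (α₂ * (j : ℕ) / 2 ^ m + φ₂) *
          Real.sin (α₃ * (k : ℕ) / 2 ^ m + φ₃)
        = u ⬝ᵥ ((List.ofFn fun l : Fin (3 * m) =>
            B l (if (l : ℕ) < m then Nat.testBit (i : ℕ) (m - 1 - (l : ℕ))
                 else if (l : ℕ) < 2 * m then
                   Nat.testBit (j : ℕ) (2 * m - 1 - (l : ℕ))
                 else Nat.testBit (k : ℕ) (3 * m - 1 - (l : ℕ)))).prod.mulVec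
            w) := by
  refine ⟨srow φ₁, ![1, 0], coreB m α₁ α₂ α₃ φ₂ φ₃, fun i j k => ?_⟩
  have hlist : (List.ofFn fun l : Fin (3 * m) =>
      coreB m α₁ α₂ α₃ φ₂ φ₃ l
        (if (l : ℕ) < m then Nat.testBit (i : ℕ) (m - 1 - (l : ℕ))
         else if (l : ℕ) < 2 * m then Nat.testBit (j : ℕ) (2 * m - 1 - (l : ℕ))
         else Nat.testBit (k : ℕ) (3 * m - 1 - (l : ℕ))))
      = chainL α₁ m (i : ℕ) ++ (modL (projM φ₂) α₂ m (j : ℕ) ++ modL (projM φ₃) α₃ m (k : ℕ)) := by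
    rw [← split_lemma m hm α₁ α₂ α₃ φ₂ φ₃ (i : ℕ) (j : ℕ) (k : ℕ)]
    rfl
  rw [hlist]
  rw [List.prod_append, List.prod_append, modL_prod _ _ _ _ hm, modL_prod _ _ _ _ hm,
    Matrix.dotProduct_mulVec]
  rw [show (chainL α₁ m (i:ℕ)).prod * (projM φ₂ * (chainL α₂ m (j:ℕ)).prod *
        (projM φ₃ * (chainL α₃ m (k:ℕ)).prod))
      = (chainL α₁ m (i:ℕ)).prod * (projM φ₂ * ((chainL α₂ m (j:ℕ)).prod *
        (projM φ₃ * (chainL α₃ m (k:ℕ)).prod))) from by rw [mul_assoc]]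
  rw [← Matrix.vecMul_vecMul, ← Matrix.vecMul_vecMul, ← Matrix.vecMul_vecMul,
    ← Matrix.vecMul_vecMul]
  rw [chain_vecMul m α₁ φ₁ (i : ℕ) i.isLt, vecMul_projM]
  simp only [smul_vecMul', smul_dotProduct, smul_eq_mul]
  rw [chain_vecMul m α₂ φ₂ (j : ℕ) j.isLt, vecMul_projM]
  simp only [smul_vecMul', smul_dotProduct, smul_eq_mul]
  rw [chain_vecMul m α₃ φ₃ (k : ℕ) k.isLt]
  have hdot : ∀ θ : ℝ, srow θ ⬝ᵥ ![1, 0] = Real.sin θ := by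
    intro θ; simp [srow, dotProduct, Fin.sum_univ_two]
  rw [hdot]
  rw [add_comm φ₁, add_comm φ₂, add_comm φ₃]
  ring
end
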